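/- arXiv:2403.14134 — 4 statements merged into one kernel-verified Lean document; each statement's English description precedes it below -/
import Mathlib

section
/- Let Γ be a Brauer configuration and V a polygon satisfying condition (E): for every e ∈ V, the polygon [σ^{-1}(e)] is either a 2-gon (edge) or equals V. Define σ' : H → H by: σ'(e) = σ(e) for e ∈ H₁(V) ∪ H₂(V); σ'(e) = \overline{p_V(e)} for e ∈ H₃(V); σ'(f) = x_f for f ∈ H₄(V); σ'(f) = n_V(f) for f ∈ H₅(V). Then σ' is a bijection of H. -/
open Finset

noncomputable section
open scoped Classical

variable {H : Type*} [Fintype H]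

/-- The setoid on angles whose classes are the `σ`-orbits (the *vertices*). -/
def orbitSetoid (σ : Equiv.Perm H) : Setoid H :=
  ⟨σ.SameCycle, ⟨fun x => Equiv.Perm.SameCycle.refl σ x,
    fun h => h.symm, fun h1 h2 => h1.trans h2⟩⟩

/-- Vertices of a Brauer configuration: `σ`-orbits of angles. -/
abbrev Vertex (σ : Equiv.Perm H) := Quotient (orbitSetoid σ)

/-- Polygons of a Brauer configuration: `ψ`-equivalence classes of angles. -/
abbrev BrauerPolygon (ψ : Setoid H) := Quotient ψ

/-- The canonical surjection `s : H → H/⟨σ⟩`. -/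
def vtx (σ : Equiv.Perm H) (h : H) : Vertex σ := Quotient.mk _ h

/-- The canonical surjection `H → H/ψ`. -/
def pgn (ψ : Setoid H) (h : H) : BrauerPolygon ψ := Quotient.mk _ h

/-- Valency of a vertex: the cardinality of `s⁻¹(u)`. -/
def valency (σ : Equiv.Perm H) (u : Vertex σ) : ℕ :=
  (univ.filter fun h => vtx σ h = u).card

/-- `occ(u, V)` : the number of angles of the polygon `V` lying on the vertex `u`. -/
def occ (σ : Equiv.Perm H) (ψ : Setoid H) (u : Vertex σ) (V : BrauerPolygon ψ) : ℕ :=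
  (univ.filter fun h => vtx σ h = u ∧ pgn ψ h = V).card

/-- Number of angles of a polygon (`#V`). -/
def polyCard (ψ : Setoid H) (V : BrauerPolygon ψ) : ℕ :=
  (univ.filter fun h => pgn ψ h = V).card

/-- The data `(H, σ, ψ, s, 𝔪)` is a Brauer configuration: `H` is nonempty,
every `ψ`-class has at least two elements, and the multiplicity is positive. -/
def IsBrauerConfig (σ : Equiv.Perm H) (ψ : Setoid H) (m : Vertex σ → ℕ) : Prop :=
  Nonempty H ∧ (∀ h : H, ∃ h', h' ≠ h ∧ ψ.r h h') ∧ (∀ v, 0 < m v)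

/-- The angle `h` belongs to the polygon `V`. -/
def inPoly (ψ : Setoid H) (V : BrauerPolygon ψ) (h : H) : Prop := pgn ψ h = V

/-- `H₁(V) = {e ∈ V : s⁻¹(s(e)) ⊆ V}`. -/
def H1 (σ : Equiv.Perm H) (ψ : Setoid H) (V : BrauerPolygon ψ) : Set H :=
  {e | inPoly ψ V e ∧ ∀ h, σ.SameCycle e h → inPoly ψ V h}

/-- `H₂(V) = {e ∈ V : s⁻¹(s(e)) ⊄ V, σ(e) ∈ V}`. -/
def H2 (σ : Equiv.Perm H) (ψ : Setoid H) (V : BrauerPolygon ψ) : Set H :=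
  {e | inPoly ψ V e ∧ ¬ (∀ h, σ.SameCycle e h → inPoly ψ V h) ∧ inPoly ψ V (σ e)}

/-- `H₃(V) = {e ∈ V : s⁻¹(s(e)) ⊄ V, σ(e) ∉ V}`. -/
def H3 (σ : Equiv.Perm H) (ψ : Setoid H) (V : BrauerPolygon ψ) : Set H :=
  {e | inPoly ψ V e ∧ ¬ (∀ h, σ.SameCycle e h → inPoly ψ V h) ∧ ¬ inPoly ψ V (σ e)}

/-- `c = min {i ≥ 1 : σ^{-i}(f) ∉ V}`. -/
def pSteps (σ : Equiv.Perm H) (ψ : Setoid H) (V : BrauerPolygon ψ) (f : H) : ℕ :=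
  sInf {i : ℕ | 1 ≤ i ∧ ¬ inPoly ψ V ((σ.symm ^ i) f)}

/-- `p_V(f) = σ^{-c}(f)`. -/
def pV (σ : Equiv.Perm H) (ψ : Setoid H) (V : BrauerPolygon ψ) (f : H) : H :=
  (σ.symm ^ pSteps σ ψ V f) f

/-- `d = min {j ≥ 1 : σ^{j}(f) ∉ V}`. -/
def nSteps (σ : Equiv.Perm H) (ψ : Setoid H) (V : BrauerPolygon ψ) (f : H) : ℕ :=
  sInf {j : ℕ | 1 ≤ j ∧ ¬ inPoly ψ V ((σ ^ j) f)}

/-- `n_V(f) = σ^{d}(f)`. -/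
def nV (σ : Equiv.Perm H) (ψ : Setoid H) (V : BrauerPolygon ψ) (f : H) : H :=
  (σ ^ nSteps σ ψ V f) f

/-- The polygon of `h` is a `2`-gon (an *edge*). -/
def isEdge (ψ : Setoid H) (h : H) : Prop :=
  (univ.filter fun x => ψ.r h x).card = 2

/-- For an angle of an edge `{h, h'}`, `bar h = h'`; junk value otherwise. -/
def bar (ψ : Setoid H) (h : H) : H :=
  if hx : ∃ x, x ≠ h ∧ ψ.r h x ∧ ∀ y, y ≠ h → ψ.r h y → y = x then hx.choose else h

/-- Condition (E): every predecessor of `V` around each vertex is an edge or `V` itself. -/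
def condE (σ : Equiv.Perm H) (ψ : Setoid H) (V : BrauerPolygon ψ) : Prop :=
  ∀ e : H, inPoly ψ V e → isEdge ψ (σ.symm e) ∨ pgn ψ (σ.symm e) = V

/-- `H₄(V) = {f ∈ H∖V : ∃ e ∈ V, σ⁻¹(e) ∉ V, n_V(f) = bar(σ⁻¹(e))}`. -/
def H4 (σ : Equiv.Perm H) (ψ : Setoid H) (V : BrauerPolygon ψ) : Set H :=
  {f | ¬ inPoly ψ V f ∧ ∃ e, inPoly ψ V e ∧ ¬ inPoly ψ V (σ.symm e) ∧
    nV σ ψ V f = bar ψ (σ.symm e)}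

/-- `H₅(V) = {f ∈ H∖V : ∀ e ∈ V with σ⁻¹(e) ∉ V, n_V(f) ≠ bar(σ⁻¹(e))}`. -/
def H5 (σ : Equiv.Perm H) (ψ : Setoid H) (V : BrauerPolygon ψ) : Set H :=
  {f | ¬ inPoly ψ V f ∧ ∀ e, inPoly ψ V e → ¬ inPoly ψ V (σ.symm e) →
    nV σ ψ V f ≠ bar ψ (σ.symm e)}

/-- For `f ∈ H₄(V)`, the unique `e ∈ V` with `n_V(f) = bar(σ⁻¹(e))`; junk otherwise. -/
def xF (σ : Equiv.Perm H) (ψ : Setoid H) (V : BrauerPolygon ψ) (f : H) : H :=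
  if hx : ∃ e, inPoly ψ V e ∧ ¬ inPoly ψ V (σ.symm e) ∧ nV σ ψ V f = bar ψ (σ.symm e)
  then hx.choose else f

/-- The underlying map `σ'` of the left flip at `V` (Table 1). -/
def flipFun (σ : Equiv.Perm H) (ψ : Setoid H) (V : BrauerPolygon ψ) (h : H) : H :=
  if h ∈ H1 σ ψ V ∨ h ∈ H2 σ ψ V then σ h
  else if h ∈ H3 σ ψ V then bar ψ (pV σ ψ V h)
  else if h ∈ H4 σ ψ V then xF σ ψ V h
  else nV σ ψ V h

/-- The orbit setoid of the flipped map `σ'` (vertices of the flipped configuration). -/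
def flipOrbitSetoid (σ : Equiv.Perm H) (ψ : Setoid H) (V : BrauerPolygon ψ) : Setoid H :=
  Relation.EqvGen.setoid (fun a b => flipFun σ ψ V a = b)

/-- The canonical surjection `s'` of the flipped configuration. -/
def vtx' (σ : Equiv.Perm H) (ψ : Setoid H) (V : BrauerPolygon ψ) (h : H) :
    Quotient (flipOrbitSetoid σ ψ V) := Quotient.mk _ h

/-- The vertex of `Γ` corresponding (via the table defining the flip) to the
`σ'`-orbit of an angle `h`. -/
def gammaFun (σ : Equiv.Perm H) (ψ : Setoid H) (V : BrauerPolygon ψ) (h : H) : Vertex σ :=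
  if h ∈ H2 σ ψ V ∨ h ∈ H3 σ ψ V then vtx σ (bar ψ (pV σ ψ V h)) else vtx σ h

/-- `occ'(v, V) = #{e ∈ H₂(V) ⊔ H₃(V) : s(bar(p_V(e))) = v}`. -/
def occ' (σ : Equiv.Perm H) (ψ : Setoid H) (V : BrauerPolygon ψ) (v : Vertex σ) : ℕ :=
  (univ.filter fun e => (e ∈ H2 σ ψ V ∨ e ∈ H3 σ ψ V) ∧
    vtx σ (bar ψ (pV σ ψ V e)) = v).card

/-- `χ(U)` : the multiplicity of `P_U` in `T_V⁰`, i.e. the number of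
`e ∈ H₂(V) ⊔ H₃(V)` with `[p_V(e)] = U`. -/
def chi (σ : Equiv.Perm H) (ψ : Setoid H) (V U : BrauerPolygon ψ) : ℕ :=
  (univ.filter fun e => (e ∈ H2 σ ψ V ∨ e ∈ H3 σ ψ V) ∧
    pgn ψ (pV σ ψ V e) = U).card

/-! The map `σ'` is injective, hence bijective since `H` is finite. Given `y = σ'(h)`, whether
`y ∈ V`, whether `σ⁻¹(y) ∈ V`, and whether `y = bar (σ⁻¹ e)` for some `e ∈ V` with `σ⁻¹(e) ∉ V`
tell which of `H₁(V) ∪ H₂(V)`, `H₃(V)`, `H₄(V)`, `H₅(V)` contains `h`; then `h` is recovered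
because `p_V` and `n_V` (first exit from `V` along the `σ`-orbit, backwards and forwards) are
inverse to each other on `H ∖ V`. For `h ∈ H₃(V)` the angle `p_V(h)` precedes `σ(p_V(h)) ∈ V`, so
by condition (E) it lies on an edge and `bar` undoes `bar`. -/

namespace Equiv.Perm

variable {α : Type*} (τ : Perm α) (P : α → Prop)

def firstExitTime (x : α) : ℕ :=
  sInf {j : ℕ | 1 ≤ j ∧ ¬ P ((τ ^ j) x)}

def firstExit (x : α) : α :=
  (τ ^ τ.firstExitTime P x) x

def IsFirstExitTime (x : α) (d : ℕ) : Prop :=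
  1 ≤ d ∧ ¬ P ((τ ^ d) x) ∧ ∀ j, 1 ≤ j → j < d → P ((τ ^ j) x)

theorem sameCycle_inv_apply (x : α) : τ⁻¹.SameCycle x (τ x) :=
  sameCycle_inv.2 (sameCycle_apply_right.2 (.refl τ x))

theorem inv_pow_pow_apply {i d : ℕ} (hid : i ≤ d) (x : α) :
    (τ⁻¹ ^ i) ((τ ^ d) x) = (τ ^ (d - i)) x := by
  obtain ⟨k, rfl⟩ := Nat.exists_eq_add_of_le hid
  rw [Nat.add_sub_cancel_left, pow_add, mul_apply, inv_pow, ← mul_apply, inv_mul_cancel,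
    one_apply]

variable {τ P}

theorem IsFirstExitTime.firstExitTime_eq {x : α} {d : ℕ} (h : τ.IsFirstExitTime P x d) :
    τ.firstExitTime P x = d := by
  obtain ⟨hd, hexit, hstay⟩ := h
  refine le_antisymm (Nat.sInf_le ⟨hd, hexit⟩) (le_csInf ⟨d, hd, hexit⟩ ?_)
  rintro j ⟨hj, hjexit⟩
  by_contra! hlt
  exact hjexit (hstay j hj hlt)

theorem isFirstExitTime_firstExitTime [Finite α] {x y : α} (hxy : τ.SameCycle x y)
    (hy : ¬ P y) : τ.IsFirstExitTime P x (τ.firstExitTime P x) := by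
  obtain ⟨i, -, rfl⟩ := hxy.exists_pow_eq'
  have hne : {j : ℕ | 1 ≤ j ∧ ¬ P ((τ ^ j) x)}.Nonempty := by
    refine ⟨i + orderOf τ, by have := orderOf_pos τ; omega, ?_⟩
    rwa [pow_add, pow_orderOf_eq_one, mul_one]
  obtain ⟨hd, hexit⟩ := Nat.sInf_mem hne
  exact ⟨hd, hexit, fun j hj hlt => by_contra fun hP => Nat.notMem_of_lt_sInf hlt ⟨hj, hP⟩⟩

theorem not_firstExit [Finite α] {x y : α} (hxy : τ.SameCycle x y) (hy : ¬ P y) :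
    ¬ P (τ.firstExit P x) :=
  (isFirstExitTime_firstExitTime hxy hy).2.1

theorem firstExit_inv_firstExit [Finite α] {x : α} (hx : ¬ P x) :
    τ⁻¹.firstExit P (τ.firstExit P x) = x := by
  obtain ⟨hd, -, hstay⟩ := isFirstExitTime_firstExitTime (SameCycle.refl τ x) hx
  set d := τ.firstExitTime P x
  have hback : τ⁻¹.IsFirstExitTime P ((τ ^ d) x) d := by
    refine ⟨hd, ?_, fun j hj hlt => ?_⟩
    · rwa [inv_pow_pow_apply τ le_rfl, Nat.sub_self, pow_zero, one_apply]
    · rw [inv_pow_pow_apply τ hlt.le]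
      exact hstay _ (by omega) (by omega)
  rw [firstExit, firstExit, hback.firstExitTime_eq, inv_pow_pow_apply τ le_rfl, Nat.sub_self,
    pow_zero, one_apply]

theorem firstExit_inv_apply [Finite α] {x y : α} (hx : P x) (hxy : τ.SameCycle x y)
    (hy : ¬ P y) : τ.firstExit P (τ⁻¹ x) = τ.firstExit P x := by
  obtain ⟨hd, hexit, hstay⟩ := isFirstExitTime_firstExitTime hxy hy
  set d := τ.firstExitTime P x
  have hshift : ∀ j, (τ ^ (j + 1)) (τ⁻¹ x) = (τ ^ j) x := fun j => by
    rw [pow_succ, mul_apply, ← mul_apply τ, mul_inv_cancel, one_apply]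
  have hprev : τ.IsFirstExitTime P (τ⁻¹ x) (d + 1) := by
    refine ⟨by omega, by rwa [hshift], fun j hj hlt => ?_⟩
    obtain ⟨k, rfl⟩ := Nat.exists_eq_add_of_le' hj
    rw [hshift]
    rcases Nat.eq_zero_or_pos k with rfl | hk
    · simpa using hx
    · exact hstay k hk (by omega)
  rw [firstExit, firstExit, hprev.firstExitTime_eq, hshift]

theorem inv_firstExit_mem [Finite α] {x y : α} (hx : P x) (hxy : τ.SameCycle x y)
    (hy : ¬ P y) : P (τ⁻¹ (τ.firstExit P x)) := by
  obtain ⟨hd, -, hstay⟩ := isFirstExitTime_firstExitTime hxy hy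
  obtain ⟨k, hk⟩ := Nat.exists_eq_add_of_le' hd
  rw [firstExit, hk, pow_succ', mul_apply, ← mul_apply τ⁻¹, inv_mul_cancel, one_apply]
  rcases Nat.eq_zero_or_pos k with rfl | hkpos
  · simpa using hx
  · exact hstay k hkpos (by omega)

end Equiv.Perm

section Bar

variable (ψ : Setoid H)

theorem rel_bar (h : H) : ψ.r h (bar ψ h) := by
  unfold bar
  split_ifs with hx
  · exact hx.choose_spec.2.1
  · exact ψ.refl' h

theorem inPoly_bar_iff (V : BrauerPolygon ψ) (h : H) : inPoly ψ V (bar ψ h) ↔ inPoly ψ V h := by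
  rw [inPoly, inPoly, pgn, pgn, Quotient.sound (ψ.symm' (rel_bar ψ h))]

theorem isEdge_congr {a b : H} (hab : ψ.r a b) : isEdge ψ a ↔ isEdge ψ b := by
  rw [isEdge, isEdge, Finset.filter_congr fun x _ => ⟨ψ.trans' (ψ.symm' hab), ψ.trans' hab⟩]

theorem exists_unique_partner_of_isEdge {h : H} (he : isEdge ψ h) :
    ∃ x, x ≠ h ∧ ψ.r h x ∧ ∀ y, y ≠ h → ψ.r h y → y = x := by
  have hh : h ∈ univ.filter fun x => ψ.r h x := Finset.mem_filter.2 ⟨mem_univ h, ψ.refl' h⟩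
  obtain ⟨x, hx⟩ := Finset.card_eq_one.mp
    (by rw [Finset.card_erase_of_mem hh, he] : ((univ.filter fun x => ψ.r h x).erase h).card = 1)
  have hmem : ∀ y, y ≠ h ∧ ψ.r h y ↔ y = x := fun y => by
    simpa using congrArg (y ∈ ·) hx
  exact ⟨x, ((hmem x).2 rfl).1, ((hmem x).2 rfl).2, fun y hy hr => (hmem y).1 ⟨hy, hr⟩⟩

theorem bar_spec {h : H} (he : isEdge ψ h) :
    bar ψ h ≠ h ∧ ∀ y, y ≠ h → ψ.r h y → y = bar ψ h := by
  have hx := exists_unique_partner_of_isEdge ψ he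
  rw [bar, dif_pos hx]
  exact ⟨hx.choose_spec.1, hx.choose_spec.2.2⟩

theorem bar_bar {h : H} (he : isEdge ψ h) : bar ψ (bar ψ h) = h :=
  ((bar_spec ψ ((isEdge_congr ψ (rel_bar ψ h)).mp he)).2 h (bar_spec ψ he).1.symm
    (ψ.symm' (rel_bar ψ h))).symm

end Bar

section Flip

variable (σ : Equiv.Perm H) (ψ : Setoid H) (V : BrauerPolygon ψ)

/-- The branches invert, in this order, the branches `H₁ ∪ H₂`, `H₄`, `H₃`, `H₅` of `flipFun`. -/
def flipInv (y : H) : H :=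
  if inPoly ψ V y then
    if inPoly ψ V (σ.symm y) then σ.symm y else pV σ ψ V (bar ψ (σ.symm y))
  else if ∃ e, inPoly ψ V e ∧ ¬ inPoly ψ V (σ.symm e) ∧ y = bar ψ (σ.symm e) then
    σ.symm (nV σ ψ V (bar ψ y))
  else pV σ ψ V y

variable {σ ψ V}

theorem pV_nV {f : H} (hf : ¬ inPoly ψ V f) : pV σ ψ V (nV σ ψ V f) = f :=
  σ.firstExit_inv_firstExit hf

theorem not_inPoly_nV {f : H} (hf : ¬ inPoly ψ V f) : ¬ inPoly ψ V (nV σ ψ V f) :=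
  σ.not_firstExit (.refl σ f) hf

theorem not_inPoly_pV_of_mem_H3 {e : H} (he : e ∈ H3 σ ψ V) : ¬ inPoly ψ V (pV σ ψ V e) :=
  σ⁻¹.not_firstExit (σ.sameCycle_inv_apply e) he.2.2

theorem inPoly_apply_pV_of_mem_H3 {e : H} (he : e ∈ H3 σ ψ V) :
    inPoly ψ V (σ (pV σ ψ V e)) :=
  σ⁻¹.inv_firstExit_mem he.1 (σ.sameCycle_inv_apply e) he.2.2

theorem nV_pV_of_mem_H3 {e : H} (he : e ∈ H3 σ ψ V) : nV σ ψ V (pV σ ψ V e) = σ e := by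
  have hshift : pV σ ψ V (σ e) = pV σ ψ V e :=
    σ⁻¹.firstExit_inv_apply he.1 (σ.sameCycle_inv_apply e) he.2.2
  rw [← hshift]
  exact σ⁻¹.firstExit_inv_firstExit he.2.2

theorem not_inPoly_of_not_mem_H123 {a : H} (h12 : ¬ (a ∈ H1 σ ψ V ∨ a ∈ H2 σ ψ V))
    (h3 : a ∉ H3 σ ψ V) : ¬ inPoly ψ V a := fun ha => by
  simp only [H1, H2, H3, Set.mem_ofPred_eq] at h12 h3
  tauto

theorem flipInv_apply_of_mem_H12 {a : H} (ha : a ∈ H1 σ ψ V ∨ a ∈ H2 σ ψ V) :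
    flipInv σ ψ V (σ a) = a := by
  have haV : inPoly ψ V a := ha.elim (·.1) (·.1)
  have hσa : inPoly ψ V (σ a) :=
    ha.elim (fun h1 => h1.2 _ (Equiv.Perm.sameCycle_apply_right.2 (.refl σ a))) (·.2.2)
  rw [flipInv, if_pos hσa, Equiv.symm_apply_apply, if_pos haV]

theorem flipInv_apply_of_mem_H3 (hE : condE σ ψ V) {a : H} (ha : a ∈ H3 σ ψ V) :
    flipInv σ ψ V (bar ψ (pV σ ψ V a)) = a := by
  have hσp := inPoly_apply_pV_of_mem_H3 ha
  have hp : ¬ inPoly ψ V (σ.symm (σ (pV σ ψ V a))) := by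
    rw [Equiv.symm_apply_apply]
    exact not_inPoly_pV_of_mem_H3 ha
  have hedge : isEdge ψ (pV σ ψ V a) := by
    simpa using (hE _ hσp).resolve_right hp
  have hex : ∃ e, inPoly ψ V e ∧ ¬ inPoly ψ V (σ.symm e) ∧
      bar ψ (pV σ ψ V a) = bar ψ (σ.symm e) :=
    ⟨σ (pV σ ψ V a), hσp, hp, by rw [Equiv.symm_apply_apply]⟩
  rw [flipInv, if_neg (by rwa [inPoly_bar_iff, ← Equiv.symm_apply_apply σ (pV σ ψ V a)]),
    if_pos hex, bar_bar ψ hedge, nV_pV_of_mem_H3 ha, Equiv.symm_apply_apply]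

theorem flipInv_apply_of_mem_H4 {a : H} (ha : a ∈ H4 σ ψ V) :
    flipInv σ ψ V (xF σ ψ V a) = a := by
  obtain ⟨hxV, hxσ, hn⟩ : inPoly ψ V (xF σ ψ V a) ∧ ¬ inPoly ψ V (σ.symm (xF σ ψ V a)) ∧
      nV σ ψ V a = bar ψ (σ.symm (xF σ ψ V a)) := by
    rw [xF, dif_pos ha.2]
    exact ha.2.choose_spec
  rw [flipInv, if_pos hxV, if_neg hxσ, ← hn, pV_nV ha.1]

theorem flipInv_apply_of_mem_H5 {a : H} (ha : a ∈ H5 σ ψ V) :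
    flipInv σ ψ V (nV σ ψ V a) = a := by
  have hex : ¬ ∃ e, inPoly ψ V e ∧ ¬ inPoly ψ V (σ.symm e) ∧ nV σ ψ V a = bar ψ (σ.symm e) :=
    fun ⟨e, he, he', hn⟩ => ha.2 e he he' hn
  rw [flipInv, if_neg (not_inPoly_nV ha.1), if_neg hex, pV_nV ha.1]

theorem leftInverse_flipInv_flipFun (hE : condE σ ψ V) :
    Function.LeftInverse (flipInv σ ψ V) (flipFun σ ψ V) := by
  intro a
  unfold flipFun
  split_ifs with h12 h3 h4
  · exact flipInv_apply_of_mem_H12 h12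
  · exact flipInv_apply_of_mem_H3 hE h3
  · exact flipInv_apply_of_mem_H4 h4
  · have haV := not_inPoly_of_not_mem_H123 h12 h3
    exact flipInv_apply_of_mem_H5 ⟨haV, fun e he he' hn => h4 ⟨haV, e, he, he', hn⟩⟩

end Flip

theorem flipFun_bijective_general
    (σ : Equiv.Perm H) (ψ : Setoid H) (V : BrauerPolygon ψ) (hE : condE σ ψ V) :
    Function.Bijective (flipFun σ ψ V) :=
  Finite.injective_iff_bijective.mp (leftInverse_flipInv_flipFun hE).injective

theorem flipFun_bijective
    (σ : Equiv.Perm H) (ψ : Setoid H) (m : Vertex σ → ℕ)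
    (hΓ : IsBrauerConfig σ ψ m) (V : BrauerPolygon ψ) (hE : condE σ ψ V) :
    Function.Bijective (flipFun σ ψ V) :=
  flipFun_bijective_general σ ψ V hE
end
end

section
/- Let Γ be a Brauer configuration, U a polygon, and W ≠ U another polygon. Then the set C(W,U) := {C_h^r C_{h,f} : h ∈ W, 0 ≤ r ≤ 𝔪(s(h)) − 1, f ∈ U, f = σ^t(h), 1 ≤ t ≤ val(s(h))} of paths in Q_Γ has cardinality Σ_{v ∈ H/⟨σ⟩} 𝔪(v) · occ(v,U) · occ(v,W). -/
open Finset

noncomputable section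
open scoped Classical

variable {H : Type*} [Fintype H]

-- STATEMENT 9 aux: the index set of the paths in `C(W,U)`
def CWU (σ : Equiv.Perm H) (ψ : Setoid H) (m : Vertex σ → ℕ) (W U : BrauerPolygon ψ) :
    Set (H × ℕ × ℕ) :=
  {p | pgn ψ p.1 = W ∧ p.2.1 < m (vtx σ p.1) ∧
    1 ≤ p.2.2 ∧ p.2.2 ≤ valency σ (vtx σ p.1) ∧ pgn ψ ((σ ^ p.2.2) p.1) = U}

/-!
A triple `(h, r, t)` of `C(W, U)` consists of an angle `h ∈ W`, a free choice of `r < 𝔪(s(h))`,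
and a step `t ∈ [1, val(s(h))]` with `σ^t(h) ∈ U`. As `val(s(h))` is the period of `h` under
`σ`, the map `t ↦ σ^t(h)` is a bijection from `[1, val(s(h))]` onto the angles at `s(h)`, so
there are `occ(s(h), U)` such steps. Summing `𝔪(s(h)) · occ(s(h), U)` over `h ∈ W` and grouping
the angles of `W` by vertex gives the formula.
-/

section PermOrbit

open Function

variable {α : Type*} [Fintype α] (σ : Equiv.Perm α) (x : α)

lemma Equiv.Perm.minimalPeriod_apply_self : minimalPeriod σ (σ x) = minimalPeriod σ x :=
  minimalPeriod_apply (σ.injective.mem_periodicPts x)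

omit [Fintype α] in
lemma Equiv.Perm.pow_succ_apply_eq_iterate (j : ℕ) : (σ ^ (j + 1)) x = σ^[j] (σ x) := by
  rw [pow_succ, Equiv.Perm.mul_apply, Equiv.Perm.iterate_eq_pow]

lemma Equiv.Perm.injOn_pow_apply_Icc :
    Set.InjOn (fun t : ℕ => (σ ^ t) x) (Set.Icc 1 (minimalPeriod σ x)) := by
  rintro _ ⟨ha, ha'⟩ _ ⟨hb, hb'⟩ hab
  obtain ⟨a, rfl⟩ := Nat.exists_eq_add_of_le' ha
  obtain ⟨b, rfl⟩ := Nat.exists_eq_add_of_le' hb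
  simp only [σ.pow_succ_apply_eq_iterate] at hab
  have hn := σ.minimalPeriod_apply_self x
  have := iterate_injOn_Iio_minimalPeriod
    (show a ∈ Set.Iio (minimalPeriod σ (σ x)) by rw [hn, Set.mem_Iio]; omega)
    (show b ∈ Set.Iio (minimalPeriod σ (σ x)) by rw [hn, Set.mem_Iio]; omega) hab
  rw [this]

lemma Equiv.Perm.image_pow_apply_Icc :
    (Icc 1 (minimalPeriod σ x)).image (fun t => (σ ^ t) x) = univ.filter (σ.SameCycle x) := by
  ext y
  simp only [mem_image, mem_Icc, mem_filter, mem_univ, true_and]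
  constructor
  · rintro ⟨t, -, rfl⟩
    exact σ.sameCycle_pow_right.2 (Equiv.Perm.SameCycle.refl σ x)
  · intro hy
    obtain ⟨k, rfl⟩ := (σ.sameCycle_apply_left.2 hy).exists_nat_pow_eq
    have hn := σ.minimalPeriod_apply_self x
    have hpos : 0 < minimalPeriod σ x :=
      minimalPeriod_pos_of_mem_periodicPts (σ.injective.mem_periodicPts x)
    refine ⟨k % minimalPeriod σ x + 1, ⟨by omega, Nat.mod_lt _ hpos⟩, ?_⟩
    rw [σ.pow_succ_apply_eq_iterate, ← hn, iterate_mod_minimalPeriod_eq,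
      Equiv.Perm.iterate_eq_pow]

lemma Equiv.Perm.card_filter_sameCycle : #(univ.filter (σ.SameCycle x)) = minimalPeriod σ x := by
  rw [← σ.image_pow_apply_Icc, card_image_of_injOn (by simpa using σ.injOn_pow_apply_Icc x),
    Nat.card_Icc, Nat.add_sub_cancel]

lemma Equiv.Perm.card_filter_pow_apply_Icc (p : α → Prop) [DecidablePred p] :
    #{t ∈ Icc 1 (minimalPeriod σ x) | p ((σ ^ t) x)} = #{y | σ.SameCycle x y ∧ p y} := by
  rw [← filter_filter, ← σ.image_pow_apply_Icc, filter_image,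
    card_image_of_injOn ((σ.injOn_pow_apply_Icc x).mono fun t ht => by simp_all)]

end PermOrbit

omit [Fintype H] in
lemma vtx_eq_vtx_iff (σ : Equiv.Perm H) (x y : H) : vtx σ x = vtx σ y ↔ σ.SameCycle x y :=
  Quotient.eq

lemma valency_vtx (σ : Equiv.Perm H) (h : H) :
    valency σ (vtx σ h) = Function.minimalPeriod σ h := by
  simp only [valency, vtx_eq_vtx_iff, Equiv.Perm.sameCycle_comm (f := σ) (y := h),
    σ.card_filter_sameCycle]

lemma card_filter_Icc_valency_eq_occ (σ : Equiv.Perm H) (ψ : Setoid H) (h : H)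
    (U : BrauerPolygon ψ) :
    #{t ∈ Icc 1 (valency σ (vtx σ h)) | pgn ψ ((σ ^ t) h) = U} = occ σ ψ (vtx σ h) U := by
  rw [occ, valency_vtx, σ.card_filter_pow_apply_Icc h (pgn ψ · = U)]
  simp only [vtx_eq_vtx_iff, Equiv.Perm.sameCycle_comm (f := σ) (y := h)]

lemma sum_filter_pgn_eq_sum_mul_occ (σ : Equiv.Perm H) (ψ : Setoid H) (W : BrauerPolygon ψ)
    (g : Vertex σ → ℕ) :
    ∑ h ∈ univ.filter (pgn ψ · = W), g (vtx σ h) = ∑ v, g v * occ σ ψ v W := by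
  rw [← sum_fiberwise_of_maps_to (g := vtx σ) (t := univ) (fun _ _ => mem_univ _)]
  refine sum_congr rfl fun v _ => ?_
  rw [sum_congr rfl fun h hh => congrArg g (mem_filter.1 hh).2, sum_const, smul_eq_mul,
    filter_filter, mul_comm]
  simp only [occ, and_comm]

lemma CWU_eq_map_sigma (σ : Equiv.Perm H) (ψ : Setoid H) (m : Vertex σ → ℕ)
    (W U : BrauerPolygon ψ) :
    CWU σ ψ m W U = ↑(((univ.filter (pgn ψ · = W)).sigma fun h =>
      range (m (vtx σ h)) ×ˢ {t ∈ Icc 1 (valency σ (vtx σ h)) | pgn ψ ((σ ^ t) h) = U}).map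
        (Equiv.sigmaEquivProd H (ℕ × ℕ)).toEmbedding) := by
  ext ⟨h, r, t⟩
  simp [CWU, and_assoc]

theorem card_CWU_general
    (σ : Equiv.Perm H) (ψ : Setoid H) (m : Vertex σ → ℕ)
    (U W : BrauerPolygon ψ) :
    Nat.card (CWU σ ψ m W U) =
      ∑ v : Vertex σ, m v * occ σ ψ v U * occ σ ψ v W := by
  rw [CWU_eq_map_sigma, Nat.card_coe_set_eq, Set.ncard_coe_finset, card_map, card_sigma]
  simp only [card_product, card_range, card_filter_Icc_valency_eq_occ]
  exact sum_filter_pgn_eq_sum_mul_occ σ ψ W (fun v => m v * occ σ ψ v U)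

theorem card_CWU
    (σ : Equiv.Perm H) (ψ : Setoid H) (m : Vertex σ → ℕ)
    (hΓ : IsBrauerConfig σ ψ m) (U W : BrauerPolygon ψ) (hUW : W ≠ U) :
    Nat.card (CWU σ ψ m W U) =
      ∑ v : Vertex σ, m v * occ σ ψ v U * occ σ ψ v W :=
  card_CWU_general σ ψ m U W
end
end

section
/- Let Γ be a Brauer configuration, V a polygon satisfying condition (E), and for each polygon U let χ(U) denote the number of e ∈ H₂(V) ⊔ H₃(V) with [p_V(e)] = U. Then for every vertex v with s^{-1}(v) ⊄ V, one has Σ_{U ∈ H/ψ} χ(U) · occ(v,U) = occ(v,V) + occ'(v,V), where occ'(v,V) := #{e ∈ H₂(V) ⊔ H₃(V) : s(\overline{p_V(e)}) = v}. -/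
open Finset

noncomputable section
open scoped Classical

variable {H : Type*} [Fintype H]

/-!
Summing `χ(U) · occ(v, U)` over the polygons `U` amounts to summing `occ(v, [p_V(e)])` over
`e ∈ H₂(V) ⊔ H₃(V)`. By condition (E) each `[p_V(e)]` is an edge `{p_V(e), bar (p_V(e))}`, so it
contributes `[s(p_V(e)) = v] + [s(bar (p_V(e))) = v]`. The second terms add up to `occ'(v, V)`.
Since `s(p_V(e)) = s(e)`, the first terms count the angles of `V` at `v`; all of these lie in
`H₂(V) ⊔ H₃(V)`, because `v` carries an angle outside `V`.
-/

namespace BrauerFlip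

variable {α : Type*} {σ : Equiv.Perm α} {ψ : Setoid α} {V : BrauerPolygon ψ}

theorem vtx_eq_vtx_iff {h h' : α} : vtx σ h = vtx σ h' ↔ σ.SameCycle h h' :=
  Quotient.eq

theorem pgn_eq_pgn_iff {h h' : α} : pgn ψ h = pgn ψ h' ↔ ψ.r h h' :=
  Quotient.eq

theorem sameCycle_pV (e : α) : σ.SameCycle e (pV σ ψ V e) :=
  ⟨-(pSteps σ ψ V e : ℤ), by rw [zpow_neg, zpow_natCast, ← inv_pow]; rfl⟩

theorem vtx_pV (e : α) : vtx σ (pV σ ψ V e) = vtx σ e :=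
  (vtx_eq_vtx_iff.mpr (sameCycle_pV e)).symm

section Finite

variable [Finite α]

theorem pSteps_spec {e : α} (hout : ∃ h, σ.SameCycle e h ∧ ¬ inPoly ψ V h) :
    1 ≤ pSteps σ ψ V e ∧ ¬ inPoly ψ V (pV σ ψ V e) := by
  refine Nat.sInf_mem (s := {i | 1 ≤ i ∧ ¬ inPoly ψ V ((σ.symm ^ i) e)}) ?_
  obtain ⟨h, hcyc, hh⟩ := hout
  obtain ⟨i, hi, -, rfl⟩ := (Equiv.Perm.sameCycle_inv.mpr hcyc).exists_pow_eq''
  exact ⟨i, hi, hh⟩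

theorem sigma_pV_mem {e : α} (he : inPoly ψ V e)
    (hout : ∃ h, σ.SameCycle e h ∧ ¬ inPoly ψ V h) :
    inPoly ψ V (σ (pV σ ψ V e)) := by
  obtain ⟨hc, -⟩ := pSteps_spec hout
  set c := pSteps σ ψ V e with hc_def
  have hstep : σ (pV σ ψ V e) = (σ.symm ^ (c - 1)) e := by
    rw [pV, ← hc_def, ← Nat.sub_add_cancel hc, pow_succ', Equiv.Perm.mul_apply,
      Nat.add_sub_cancel]
    exact σ.apply_symm_apply _
  rw [hstep]
  rcases Nat.eq_zero_or_pos (c - 1) with h0 | hpos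
  · rwa [h0, pow_zero, Equiv.Perm.one_apply]
  · by_contra hnot
    exact Nat.notMem_of_lt_sInf (by omega : c - 1 < c) ⟨hpos, hnot⟩

end Finite

section Fintype

variable [Fintype α]

def H23 (σ : Equiv.Perm α) (ψ : Setoid α) (V : BrauerPolygon ψ) : Finset α :=
  univ.filter fun e => e ∈ H2 σ ψ V ∨ e ∈ H3 σ ψ V

theorem mem_H23 {e : α} :
    e ∈ H23 σ ψ V ↔ inPoly ψ V e ∧ ∃ h, σ.SameCycle e h ∧ ¬ inPoly ψ V h := by
  simp only [H23, H2, H3, mem_filter, mem_univ, true_and, Set.mem_ofPred_eq, not_forall,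
    exists_prop, ← and_or_left, em, and_true]

theorem isEdge_pV (hE : condE σ ψ V) {e : α} (he : e ∈ H23 σ ψ V) :
    isEdge ψ (pV σ ψ V e) := by
  obtain ⟨heV, hout⟩ := mem_H23.mp he
  rcases hE _ (sigma_pV_mem heV hout) with hedge | hV
  · rwa [Equiv.symm_apply_apply] at hedge
  · rw [Equiv.symm_apply_apply] at hV
    exact absurd hV (pSteps_spec hout).2

theorem exists_unique_ne_rel_of_isEdge {h : α} (hedge : isEdge ψ h) :
    ∃ x, x ≠ h ∧ ψ.r h x ∧ ∀ y, y ≠ h → ψ.r h y → y = x := by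
  obtain ⟨a, b, hab, hs⟩ := card_eq_two.mp hedge
  have hrel : ∀ y, ψ.r h y ↔ y = a ∨ y = b := fun y => by
    simpa using Finset.ext_iff.mp hs y
  rcases (hrel h).mp (ψ.refl h) with rfl | rfl
  · exact ⟨b, hab.symm, (hrel b).mpr (.inr rfl), fun y hy hr => ((hrel y).mp hr).resolve_left hy⟩
  · exact ⟨a, hab, (hrel a).mpr (.inl rfl), fun y hy hr => ((hrel y).mp hr).resolve_right hy⟩

theorem bar_ne_self {h : α} (hedge : isEdge ψ h) : bar ψ h ≠ h := by
  rw [bar, dif_pos (exists_unique_ne_rel_of_isEdge hedge)]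
  exact (exists_unique_ne_rel_of_isEdge hedge).choose_spec.1

theorem rel_bar {h : α} (hedge : isEdge ψ h) : ψ.r h (bar ψ h) := by
  rw [bar, dif_pos (exists_unique_ne_rel_of_isEdge hedge)]
  exact (exists_unique_ne_rel_of_isEdge hedge).choose_spec.2.1

theorem filter_rel_eq_pair_bar {h : α} (hedge : isEdge ψ h) :
    univ.filter (ψ.r h ·) = {h, bar ψ h} := by
  refine (eq_of_subset_of_card_le ?_ ?_).symm
  · simp [insert_subset_iff, rel_bar hedge]
  · rw [hedge, card_pair (bar_ne_self hedge).symm]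

theorem occ_pgn_of_isEdge (u : Vertex σ) {h : α} (hedge : isEdge ψ h) :
    occ σ ψ u (pgn ψ h) =
      (if vtx σ h = u then 1 else 0) + (if vtx σ (bar ψ h) = u then 1 else 0) := by
  have hfilter : univ.filter (fun x => vtx σ x = u ∧ pgn ψ x = pgn ψ h) =
      ({h, bar ψ h} : Finset α).filter (vtx σ · = u) := by
    rw [← filter_rel_eq_pair_bar hedge, filter_filter]
    simp only [pgn_eq_pgn_iff, ψ.comm, and_comm]
  rw [occ, hfilter, card_filter, sum_pair (bar_ne_self hedge).symm]

theorem sum_chi_mul (f : BrauerPolygon ψ → ℕ) :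
    ∑ U, chi σ ψ V U * f U = ∑ e ∈ H23 σ ψ V, f (pgn ψ (pV σ ψ V e)) := by
  rw [← sum_fiberwise' (H23 σ ψ V) (fun e => pgn ψ (pV σ ψ V e)) f]
  refine sum_congr rfl fun U _ => ?_
  rw [sum_const, smul_eq_mul, H23, filter_filter]
  rfl

theorem occ_eq_sum_H23 {v : Vertex σ} (hv : ∃ h, vtx σ h = v ∧ ¬ inPoly ψ V h) :
    occ σ ψ v V = ∑ e ∈ H23 σ ψ V, if vtx σ (pV σ ψ V e) = v then 1 else 0 := by
  simp_rw [vtx_pV, ← card_filter, occ]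
  congr 1
  ext e
  simp only [mem_filter, mem_univ, true_and, mem_H23]
  constructor
  · rintro ⟨hev, heV⟩
    obtain ⟨h, hhv, hh⟩ := hv
    exact ⟨⟨heV, h, vtx_eq_vtx_iff.mp (hev.trans hhv.symm), hh⟩, hev⟩
  · rintro ⟨⟨heV, -⟩, hev⟩
    exact ⟨hev, heV⟩

theorem occ'_eq_sum_H23 (v : Vertex σ) :
    occ' σ ψ V v = ∑ e ∈ H23 σ ψ V, if vtx σ (bar ψ (pV σ ψ V e)) = v then 1 else 0 := by
  rw [← card_filter, H23, filter_filter]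
  rfl

end Fintype

end BrauerFlip

open BrauerFlip

theorem chi_occ_sum_general
    (σ : Equiv.Perm H) (ψ : Setoid H) (V : BrauerPolygon ψ) (hE : condE σ ψ V)
    (v : Vertex σ) (hv : ∃ h : H, vtx σ h = v ∧ ¬ inPoly ψ V h) :
    ∑ U : BrauerPolygon ψ, chi σ ψ V U * occ σ ψ v U =
      occ σ ψ v V + occ' σ ψ V v := by
  calc ∑ U, chi σ ψ V U * occ σ ψ v U
      = ∑ e ∈ H23 σ ψ V, occ σ ψ v (pgn ψ (pV σ ψ V e)) := sum_chi_mul _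
    _ = ∑ e ∈ H23 σ ψ V, ((if vtx σ (pV σ ψ V e) = v then 1 else 0) +
          if vtx σ (bar ψ (pV σ ψ V e)) = v then 1 else 0) :=
        sum_congr rfl fun _ he => occ_pgn_of_isEdge v (isEdge_pV hE he)
    _ = occ σ ψ v V + occ' σ ψ V v := by
        rw [sum_add_distrib, occ_eq_sum_H23 hv, occ'_eq_sum_H23]

theorem chi_occ_sum
    (σ : Equiv.Perm H) (ψ : Setoid H) (m : Vertex σ → ℕ)
    (hΓ : IsBrauerConfig σ ψ m) (V : BrauerPolygon ψ) (hE : condE σ ψ V)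
    (v : Vertex σ) (hv : ∃ h : H, vtx σ h = v ∧ ¬ inPoly ψ V h) :
    ∑ U : BrauerPolygon ψ, chi σ ψ V U * occ σ ψ v U =
      occ σ ψ v V + occ' σ ψ V v :=
  chi_occ_sum_general σ ψ V hE v hv
end
end

section
/- Let Γ be a Brauer configuration and V a polygon of Γ satisfying condition (E), and let Γ' = μ_V^-(Γ) be the left flip. Then Γ' is again a Brauer configuration: every ψ'-equivalence class has at least two elements and every element of H appears in some polygon; moreover the vertex sets H/⟨σ⟩ and H/⟨σ'⟩ are in canonical bijection via γ, and 𝔪' := 𝔪 ∘ γ is a well-defined multiplicity function. -/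
open Finset

noncomputable section
open scoped Classical

variable {H : Type*} [Fintype H]

-- ===================== auxiliary development =====================
namespace FlipAux
set_option linter.unusedSectionVars false

variable {H : Type*} [Fintype H] (σ : Equiv.Perm H) (ψ : Setoid H) (V : BrauerPolygon ψ)

/- ## Power algebra -/

lemma pow_apply_pow (j k : ℕ) (x : H) : (σ ^ j) ((σ ^ k) x) = (σ ^ (j + k)) x := by
  rw [pow_add, Equiv.Perm.mul_apply]

lemma symm_pow_eq (n : ℕ) : (σ.symm ^ n) = (σ ^ n)⁻¹ := by
  rw [← Equiv.Perm.inv_def, inv_pow]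

lemma pow_apply_symm_pow (k c : ℕ) (hkc : k ≤ c) (x : H) :
    (σ ^ k) ((σ.symm ^ c) x) = (σ.symm ^ (c - k)) x := by
  have hc : c - k + k = c := Nat.sub_add_cancel hkc
  rw [symm_pow_eq, symm_pow_eq, ← Equiv.Perm.mul_apply]
  congr 1
  rw [← hc, pow_add, mul_inv_rev, ← mul_assoc, mul_inv_cancel, one_mul,
    Nat.add_sub_cancel]

lemma symm_pow_apply_pow (k c : ℕ) (hkc : k ≤ c) (x : H) :
    (σ.symm ^ k) ((σ ^ c) x) = (σ ^ (c - k)) x := by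
  have hc : k + (c - k) = c := Nat.add_sub_cancel' hkc
  rw [symm_pow_eq, ← Equiv.Perm.mul_apply]
  congr 1
  rw [← hc, pow_add, ← mul_assoc, inv_mul_cancel, one_mul, Nat.add_sub_cancel_left]

lemma sigma_apply_symm_pow (c : ℕ) (hc : 1 ≤ c) (x : H) :
    σ ((σ.symm ^ c) x) = (σ.symm ^ (c - 1)) x := by
  have := pow_apply_symm_pow σ 1 c hc x
  rwa [pow_one] at this

lemma symm_pow_apply_sigma (i : ℕ) (hi : 1 ≤ i) (x : H) :
    (σ.symm ^ i) (σ x) = (σ.symm ^ (i - 1)) x := by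
  obtain ⟨j, rfl⟩ : ∃ j, i = j + 1 := ⟨i - 1, by omega⟩
  rw [pow_succ, Equiv.Perm.mul_apply, Equiv.symm_apply_apply, Nat.add_sub_cancel]

lemma pow_succ_apply (n : ℕ) (x : H) : (σ ^ (n + 1)) x = σ ((σ ^ n) x) := by
  rw [pow_succ', Equiv.Perm.mul_apply]

/- ## Same-cycle basics -/

lemma sc_pow (n : ℕ) (x : H) : σ.SameCycle x ((σ ^ n) x) :=
  ⟨n, by rw [zpow_natCast]⟩

lemma sc_symm_pow (n : ℕ) (x : H) : σ.SameCycle x ((σ.symm ^ n) x) :=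
  ⟨-(n : ℤ), by rw [zpow_neg, zpow_natCast, ← symm_pow_eq]⟩

lemma sc_symm_apply (x : H) : σ.SameCycle x (σ.symm x) := by
  have := sc_symm_pow σ 1 x
  rwa [pow_one] at this

lemma exists_pow_sc {x y : H} (h : σ.SameCycle x y) : ∃ n, 1 ≤ n ∧ (σ ^ n) x = y := by
  obtain ⟨i, hi, -, hix⟩ := h.exists_pow_eq''
  exact ⟨i, hi, hix⟩

lemma exists_symm_pow_sc {x y : H} (h : σ.SameCycle x y) :
    ∃ n, 1 ≤ n ∧ (σ.symm ^ n) x = y := by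
  have h' : (σ⁻¹).SameCycle x y := Equiv.Perm.sameCycle_inv.mpr h
  obtain ⟨i, hi, -, hix⟩ := h'.exists_pow_eq''
  refine ⟨i, hi, ?_⟩
  rwa [symm_pow_eq, ← inv_pow]

/- ## inPoly and bar -/

lemma inPoly_iff_of_rel {a b : H} (hab : ψ.r a b) : inPoly ψ V a ↔ inPoly ψ V b := by
  unfold inPoly pgn
  rw [Quotient.sound hab]

lemma bar_spec {a : H} (ha : isEdge ψ a) :
    bar ψ a ≠ a ∧ ψ.r a (bar ψ a) ∧ ∀ y, y ≠ a → ψ.r a y → y = bar ψ a := by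
  have hx : ∃ x, x ≠ a ∧ ψ.r a x ∧ ∀ y, y ≠ a → ψ.r a y → y = x := by
    obtain ⟨u, v, huv, hS⟩ := Finset.card_eq_two.mp ha
    have hmem : ∀ x, ψ.r a x ↔ x = u ∨ x = v := by
      intro x
      constructor
      · intro hx
        have : x ∈ ({u, v} : Finset H) := by
          rw [← hS]; simp [hx]
        simpa using this
      · intro hx
        have : x ∈ ({u, v} : Finset H) := by simpa using hx
        rw [← hS] at this
        exact (Finset.mem_filter.mp this).2
    have haa : a = u ∨ a = v := (hmem a).mp (ψ.refl' a)
    rcases haa with rfl | rfl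
    · exact ⟨v, fun h => huv h.symm, (hmem v).mpr (Or.inr rfl),
        fun y hy hry => ((hmem y).mp hry).resolve_left hy⟩
    · exact ⟨u, huv, (hmem u).mpr (Or.inl rfl),
        fun y hy hry => ((hmem y).mp hry).resolve_right hy⟩
  rw [bar, dif_pos hx]
  obtain ⟨h1, h2, h3⟩ := hx.choose_spec
  exact ⟨h1, h2, h3⟩

lemma isEdge_of_rel {a b : H} (hab : ψ.r a b) (ha : isEdge ψ a) : isEdge ψ b := by
  unfold isEdge at ha ⊢
  have : (Finset.univ.filter fun x => ψ.r b x) = (Finset.univ.filter fun x => ψ.r a x) := by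
    apply Finset.filter_congr
    intro x _
    exact ⟨fun h => ψ.trans' hab h, fun h => ψ.trans' (ψ.symm' hab) h⟩
  rw [this]; exact ha

lemma bar_bar {a : H} (ha : isEdge ψ a) : bar ψ (bar ψ a) = a := by
  obtain ⟨h1, h2, h3⟩ := bar_spec ψ ha
  have hb : isEdge ψ (bar ψ a) := isEdge_of_rel ψ h2 ha
  obtain ⟨g1, g2, g3⟩ := bar_spec ψ hb
  exact (g3 a (fun h => h1 h.symm) (ψ.symm' h2)).symm

/- ## condE consequences -/

lemma edge_of_exit (hE : condE σ ψ V) {b : H} (hb : inPoly ψ V (σ b)) (hbn : ¬ inPoly ψ V b) :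
    isEdge ψ b ∧ ¬ inPoly ψ V (bar ψ b) ∧ bar ψ (bar ψ b) = b := by
  have h := hE (σ b) hb
  rw [Equiv.symm_apply_apply] at h
  have hedge : isEdge ψ b := h.resolve_right hbn
  obtain ⟨h1, h2, h3⟩ := bar_spec ψ hedge
  exact ⟨hedge, fun hc => hbn ((inPoly_iff_of_rel ψ V h2).mpr hc), bar_bar ψ hedge⟩

/- ## nSteps / pSteps -/

lemma nSteps_eq {h : H} {d : ℕ} (hd1 : 1 ≤ d) (hdP : ¬ inPoly ψ V ((σ ^ d) h))
    (hmin : ∀ j, 1 ≤ j → j < d → inPoly ψ V ((σ ^ j) h)) : nSteps σ ψ V h = d := by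
  have hdmem : d ∈ {j : ℕ | 1 ≤ j ∧ ¬ inPoly ψ V ((σ ^ j) h)} := ⟨hd1, hdP⟩
  refine le_antisymm (Nat.sInf_le hdmem) ?_
  by_contra hlt
  push_neg at hlt
  have hmem := Nat.sInf_mem (⟨d, hdmem⟩ : Set.Nonempty _)
  exact hmem.2 (hmin _ hmem.1 hlt)

lemma pSteps_eq {h : H} {c : ℕ} (hc1 : 1 ≤ c) (hcP : ¬ inPoly ψ V ((σ.symm ^ c) h))
    (hmin : ∀ i, 1 ≤ i → i < c → inPoly ψ V ((σ.symm ^ i) h)) : pSteps σ ψ V h = c := by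
  have hcmem : c ∈ {i : ℕ | 1 ≤ i ∧ ¬ inPoly ψ V ((σ.symm ^ i) h)} := ⟨hc1, hcP⟩
  refine le_antisymm (Nat.sInf_le hcmem) ?_
  by_contra hlt
  push_neg at hlt
  have hmem := Nat.sInf_mem (⟨c, hcmem⟩ : Set.Nonempty _)
  exact hmem.2 (hmin _ hmem.1 hlt)

lemma nSteps_spec {h : H} (hne : ∃ j, 1 ≤ j ∧ ¬ inPoly ψ V ((σ ^ j) h)) :
    1 ≤ nSteps σ ψ V h ∧ ¬ inPoly ψ V (nV σ ψ V h) ∧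
      ∀ j, 1 ≤ j → j < nSteps σ ψ V h → inPoly ψ V ((σ ^ j) h) := by
  obtain ⟨d, hd⟩ := hne
  have hmem := Nat.sInf_mem (⟨d, hd⟩ : Set.Nonempty {j : ℕ | 1 ≤ j ∧ ¬ inPoly ψ V ((σ ^ j) h)})
  refine ⟨hmem.1, hmem.2, fun j h1 hj => ?_⟩
  by_contra hc
  exact absurd (Nat.sInf_le (⟨h1, hc⟩ : j ∈ {j : ℕ | 1 ≤ j ∧ ¬ inPoly ψ V ((σ ^ j) h)}))
    (not_le.mpr hj)

lemma pSteps_spec {h : H} (hne : ∃ i, 1 ≤ i ∧ ¬ inPoly ψ V ((σ.symm ^ i) h)) :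
    1 ≤ pSteps σ ψ V h ∧ ¬ inPoly ψ V (pV σ ψ V h) ∧
      ∀ i, 1 ≤ i → i < pSteps σ ψ V h → inPoly ψ V ((σ.symm ^ i) h) := by
  obtain ⟨c, hc⟩ := hne
  have hmem := Nat.sInf_mem (⟨c, hc⟩ : Set.Nonempty {i : ℕ | 1 ≤ i ∧ ¬ inPoly ψ V ((σ.symm ^ i) h)})
  refine ⟨hmem.1, hmem.2, fun i h1 hi => ?_⟩
  by_contra hcon
  exact absurd (Nat.sInf_le (⟨h1, hcon⟩ : i ∈ {i : ℕ | 1 ≤ i ∧ ¬ inPoly ψ V ((σ.symm ^ i) h)}))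
    (not_le.mpr hi)

lemma forward_ne {h : H} (hh : ¬ inPoly ψ V h) :
    ∃ j, 1 ≤ j ∧ ¬ inPoly ψ V ((σ ^ j) h) := by
  refine ⟨orderOf σ, orderOf_pos σ, ?_⟩
  rw [pow_orderOf_eq_one]
  simpa using hh

lemma backward_ne {h : H} (hh : ¬ inPoly ψ V h) :
    ∃ i, 1 ≤ i ∧ ¬ inPoly ψ V ((σ.symm ^ i) h) := by
  refine ⟨orderOf σ.symm, orderOf_pos σ.symm, ?_⟩
  rw [pow_orderOf_eq_one]
  simpa using hh

lemma backward_ne_of_sc {h : H} (hsc : ¬ ∀ x, σ.SameCycle h x → inPoly ψ V x) :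
    ∃ i, 1 ≤ i ∧ ¬ inPoly ψ V ((σ.symm ^ i) h) := by
  push_neg at hsc
  obtain ⟨x, hx, hxV⟩ := hsc
  obtain ⟨n, hn, rfl⟩ := exists_symm_pow_sc σ hx
  exact ⟨n, hn, hxV⟩

lemma forward_ne_of_sc {h : H} (hsc : ¬ ∀ x, σ.SameCycle h x → inPoly ψ V x) :
    ∃ j, 1 ≤ j ∧ ¬ inPoly ψ V ((σ ^ j) h) := by
  push_neg at hsc
  obtain ⟨x, hx, hxV⟩ := hsc
  obtain ⟨n, hn, rfl⟩ := exists_pow_sc σ hx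
  exact ⟨n, hn, hxV⟩

/- ## Key computations about pV and nV -/

lemma sigma_pV_in {h : H} (hh : inPoly ψ V h)
    (hne : ∃ i, 1 ≤ i ∧ ¬ inPoly ψ V ((σ.symm ^ i) h)) :
    inPoly ψ V (σ (pV σ ψ V h)) := by
  obtain ⟨h1, _, hmin⟩ := pSteps_spec σ ψ V hne
  have heq : σ (pV σ ψ V h) = (σ.symm ^ (pSteps σ ψ V h - 1)) h :=
    sigma_apply_symm_pow σ _ h1 h
  rw [heq]
  rcases eq_or_lt_of_le h1 with hc | hc
  · rw [← hc]
    simpa using hh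
  · exact hmin _ (by omega) (by omega)

lemma nV_pV {h : H} (hh : ¬ inPoly ψ V h) :
    nSteps σ ψ V (pV σ ψ V h) = pSteps σ ψ V h ∧ nV σ ψ V (pV σ ψ V h) = h := by
  obtain ⟨hc1, hcP, hcmin⟩ := pSteps_spec σ ψ V (backward_ne σ ψ V hh)
  set c := pSteps σ ψ V h with hcdef
  have key : nSteps σ ψ V (pV σ ψ V h) = c := by
    apply nSteps_eq
    · exact hc1
    · show ¬ inPoly ψ V ((σ ^ c) ((σ.symm ^ c) h))
      rw [pow_apply_symm_pow σ c c le_rfl, Nat.sub_self, pow_zero]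
      simpa using hh
    · intro j hj1 hjc
      show inPoly ψ V ((σ ^ j) ((σ.symm ^ c) h))
      rw [pow_apply_symm_pow σ j c hjc.le]
      exact hcmin _ (by omega) (by omega)
  refine ⟨key, ?_⟩
  show (σ ^ nSteps σ ψ V (pV σ ψ V h)) (pV σ ψ V h) = h
  rw [key]
  show (σ ^ c) ((σ.symm ^ c) h) = h
  rw [pow_apply_symm_pow σ c c le_rfl, Nat.sub_self, pow_zero]
  simp

lemma pV_nV {h : H} (hh : ¬ inPoly ψ V h) : pV σ ψ V (nV σ ψ V h) = h := by
  obtain ⟨hd1, hdP, hdmin⟩ := nSteps_spec σ ψ V (forward_ne σ ψ V hh)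
  set d := nSteps σ ψ V h with hddef
  have key : pSteps σ ψ V (nV σ ψ V h) = d := by
    apply pSteps_eq
    · exact hd1
    · show ¬ inPoly ψ V ((σ.symm ^ d) ((σ ^ d) h))
      rw [symm_pow_apply_pow σ d d le_rfl, Nat.sub_self, pow_zero]
      simpa using hh
    · intro i hi1 hid
      show inPoly ψ V ((σ.symm ^ i) ((σ ^ d) h))
      rw [symm_pow_apply_pow σ i d hid.le]
      exact hdmin _ (by omega) (by omega)
  show (σ.symm ^ pSteps σ ψ V (nV σ ψ V h)) (nV σ ψ V h) = h
  rw [key]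
  show (σ.symm ^ d) ((σ ^ d) h) = h
  rw [symm_pow_apply_pow σ d d le_rfl, Nat.sub_self, pow_zero]
  simp

lemma nV_pV_of_exit {h : H} (hh : inPoly ψ V h) (hσh : ¬ inPoly ψ V (σ h))
    (hne : ∃ i, 1 ≤ i ∧ ¬ inPoly ψ V ((σ.symm ^ i) h)) :
    nV σ ψ V (pV σ ψ V h) = σ h := by
  obtain ⟨hc1, hcP, hcmin⟩ := pSteps_spec σ ψ V hne
  set c := pSteps σ ψ V h with hcdef
  have key : nSteps σ ψ V (pV σ ψ V h) = c + 1 := by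
    apply nSteps_eq
    · omega
    · show ¬ inPoly ψ V ((σ ^ (c + 1)) ((σ.symm ^ c) h))
      rw [pow_succ_apply, pow_apply_symm_pow σ c c le_rfl, Nat.sub_self, pow_zero]
      simpa using hσh
    · intro j hj1 hjc
      show inPoly ψ V ((σ ^ j) ((σ.symm ^ c) h))
      rw [pow_apply_symm_pow σ j c (by omega)]
      rcases eq_or_lt_of_le (show j ≤ c by omega) with hj | hj
      · rw [hj, Nat.sub_self, pow_zero]
        simpa using hh
      · exact hcmin _ (by omega) (by omega)
  show (σ ^ nSteps σ ψ V (pV σ ψ V h)) (pV σ ψ V h) = σ h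
  rw [key]
  show (σ ^ (c + 1)) ((σ.symm ^ c) h) = σ h
  rw [pow_succ_apply, pow_apply_symm_pow σ c c le_rfl, Nat.sub_self, pow_zero]
  simp

lemma pV_sigma {h : H} (hh : inPoly ψ V h)
    (hne : ∃ i, 1 ≤ i ∧ ¬ inPoly ψ V ((σ.symm ^ i) h)) :
    pV σ ψ V (σ h) = pV σ ψ V h := by
  obtain ⟨hc1, hcP, hcmin⟩ := pSteps_spec σ ψ V hne
  set c := pSteps σ ψ V h with hcdef
  have key : pSteps σ ψ V (σ h) = c + 1 := by
    apply pSteps_eq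
    · omega
    · show ¬ inPoly ψ V ((σ.symm ^ (c + 1)) (σ h))
      rw [symm_pow_apply_sigma σ _ (by omega), Nat.add_sub_cancel]
      exact hcP
    · intro i hi1 hic
      show inPoly ψ V ((σ.symm ^ i) (σ h))
      rw [symm_pow_apply_sigma σ _ hi1]
      rcases eq_or_lt_of_le hi1 with hi | hi
      · rw [← hi]
        simpa using hh
      · exact hcmin _ (by omega) (by omega)
  show (σ.symm ^ pSteps σ ψ V (σ h)) (σ h) = pV σ ψ V h
  rw [key, symm_pow_apply_sigma σ _ (by omega), Nat.add_sub_cancel, pV, ← hcdef]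

lemma nSteps_sigma {a : H} (ha : inPoly ψ V a) (hσa : inPoly ψ V (σ a))
    (hne : ∃ j, 1 ≤ j ∧ ¬ inPoly ψ V ((σ ^ j) a)) :
    nSteps σ ψ V (σ a) = nSteps σ ψ V a - 1 ∧ 2 ≤ nSteps σ ψ V a := by
  obtain ⟨hd1, hdP, hdmin⟩ := nSteps_spec σ ψ V hne
  set d := nSteps σ ψ V a with hddef
  have hd2 : 2 ≤ d := by
    rcases eq_or_lt_of_le hd1 with hd | hd
    · exfalso
      apply hdP
      show inPoly ψ V ((σ ^ d) a)
      rw [← hd, pow_one]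
      exact hσa
    · omega
  refine ⟨?_, hd2⟩
  apply nSteps_eq
  · omega
  · show ¬ inPoly ψ V ((σ ^ (d - 1)) (σ a))
    have : (σ ^ (d - 1)) (σ a) = (σ ^ d) a := by
      rw [show σ a = (σ ^ 1) a from (pow_one σ) ▸ rfl, pow_apply_pow,
        Nat.sub_add_cancel (show 1 ≤ d by omega)]
    rw [this]
    exact hdP
  · intro j hj1 hjd
    show inPoly ψ V ((σ ^ j) (σ a))
    have : (σ ^ j) (σ a) = (σ ^ (j + 1)) a := by
      rw [show σ a = (σ ^ 1) a from (pow_one σ) ▸ rfl, pow_apply_pow]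
    rw [this]
    exact hdmin _ (by omega) (by omega)

/- ## flipFun case evaluation -/

lemma notP_not23 {h : H} (hh : ¬ inPoly ψ V h) :
    ¬ (h ∈ H2 σ ψ V ∨ h ∈ H3 σ ψ V) := by
  rintro (h2 | h3)
  · exact hh h2.1
  · exact hh h3.1

lemma H1_not23 {h : H} (h1 : h ∈ H1 σ ψ V) :
    ¬ (h ∈ H2 σ ψ V ∨ h ∈ H3 σ ψ V) := by
  rintro (h2 | h3)
  · exact h2.2.1 h1.2
  · exact h3.2.1 h1.2

lemma flip_H12 {h : H} (h12 : h ∈ H1 σ ψ V ∨ h ∈ H2 σ ψ V) :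
    flipFun σ ψ V h = σ h := by
  rw [flipFun, if_pos h12]

lemma flip_H3 {h : H} (h3 : h ∈ H3 σ ψ V) :
    flipFun σ ψ V h = bar ψ (pV σ ψ V h) := by
  have h12 : ¬ (h ∈ H1 σ ψ V ∨ h ∈ H2 σ ψ V) := by
    rintro (h1 | h2)
    · exact h3.2.1 h1.2
    · exact h3.2.2 h2.2.2
  rw [flipFun, if_neg h12, if_pos h3]

lemma flip_H4 {h : H} (h4 : h ∈ H4 σ ψ V) :
    flipFun σ ψ V h = xF σ ψ V h := by
  have h12 : ¬ (h ∈ H1 σ ψ V ∨ h ∈ H2 σ ψ V) := by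
    rintro (h1 | h2)
    · exact h4.1 h1.1
    · exact h4.1 h2.1
  have h3 : h ∉ H3 σ ψ V := fun h3 => h4.1 h3.1
  rw [flipFun, if_neg h12, if_neg h3, if_pos h4]

lemma flip_H5 {h : H} (h5 : h ∈ H5 σ ψ V) :
    flipFun σ ψ V h = nV σ ψ V h := by
  have h12 : ¬ (h ∈ H1 σ ψ V ∨ h ∈ H2 σ ψ V) := by
    rintro (h1 | h2)
    · exact h5.1 h1.1
    · exact h5.1 h2.1
  have h3 : h ∉ H3 σ ψ V := fun h3 => h5.1 h3.1
  have h4 : h ∉ H4 σ ψ V := by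
    rintro ⟨-, e, he, hse, hnv⟩
    exact h5.2 e he hse hnv
  rw [flipFun, if_neg h12, if_neg h3, if_neg h4]

lemma xF_spec {h : H} (h4 : h ∈ H4 σ ψ V) :
    inPoly ψ V (xF σ ψ V h) ∧ ¬ inPoly ψ V (σ.symm (xF σ ψ V h)) ∧
      nV σ ψ V h = bar ψ (σ.symm (xF σ ψ V h)) := by
  have hx : ∃ e, inPoly ψ V e ∧ ¬ inPoly ψ V (σ.symm e) ∧
      nV σ ψ V h = bar ψ (σ.symm e) := h4.2
  rw [xF, dif_pos hx]
  exact hx.choose_spec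

lemma cases5 (h : H) :
    h ∈ H1 σ ψ V ∨ h ∈ H2 σ ψ V ∨ h ∈ H3 σ ψ V ∨ h ∈ H4 σ ψ V ∨ h ∈ H5 σ ψ V := by
  by_cases hP : inPoly ψ V h
  · by_cases hsc : ∀ x, σ.SameCycle h x → inPoly ψ V x
    · exact Or.inl ⟨hP, hsc⟩
    · by_cases hs : inPoly ψ V (σ h)
      · exact Or.inr (Or.inl ⟨hP, hsc, hs⟩)
      · exact Or.inr (Or.inr (Or.inl ⟨hP, hsc, hs⟩))
  · by_cases h4 : ∃ e, inPoly ψ V e ∧ ¬ inPoly ψ V (σ.symm e) ∧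
        nV σ ψ V h = bar ψ (σ.symm e)
    · exact Or.inr (Or.inr (Or.inr (Or.inl ⟨hP, h4⟩)))
    · exact Or.inr (Or.inr (Or.inr (Or.inr ⟨hP,
        fun e he hse hnv => h4 ⟨e, he, hse, hnv⟩⟩)))

/- ## The flip orbit relation -/

/-- Abbreviation for the `σ'`-orbit equivalence. -/
def FRel (a b : H) : Prop := Relation.EqvGen (fun a b => flipFun σ ψ V a = b) a b

lemma FRel.step (h : H) : FRel σ ψ V h (flipFun σ ψ V h) :=
  Relation.EqvGen.rel _ _ rfl

lemma FRel.refl (h : H) : FRel σ ψ V h h := Relation.EqvGen.refl h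

lemma FRel.symm {a b : H} (h : FRel σ ψ V a b) : FRel σ ψ V b a :=
  Relation.EqvGen.symm _ _ h

lemma FRel.trans {a b c : H} (h1 : FRel σ ψ V a b) (h2 : FRel σ ψ V b c) :
    FRel σ ψ V a c := Relation.EqvGen.trans _ _ _ h1 h2

/-- Chaining through a run: every element of `H₂ ∪ H₃` is `σ'`-equivalent to
`bar (p_V ·)` of itself. -/
lemma chain_H23 : ∀ d a, nSteps σ ψ V a ≤ d → inPoly ψ V a →
    ¬ (∀ x, σ.SameCycle a x → inPoly ψ V x) →
    FRel σ ψ V a (bar ψ (pV σ ψ V a)) := by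
  intro d
  induction d with
  | zero =>
    intro a hd ha hsc
    obtain ⟨h1, -, -⟩ := nSteps_spec σ ψ V (forward_ne_of_sc σ ψ V hsc)
    omega
  | succ d ih =>
    intro a hd ha hsc
    by_cases hσa : inPoly ψ V (σ a)
    · have h2 : a ∈ H2 σ ψ V := ⟨ha, hsc, hσa⟩
      have hscσ : ¬ ∀ x, σ.SameCycle (σ a) x → inPoly ψ V x := by
        intro hall
        exact hsc fun x hx => hall x (Equiv.Perm.sameCycle_apply_left.mpr hx)
      have hns := nSteps_sigma σ ψ V ha hσa (forward_ne_of_sc σ ψ V hsc)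
      have step1 : FRel σ ψ V a (σ a) := by
        have := FRel.step σ ψ V a
        rwa [flip_H12 σ ψ V (Or.inr h2)] at this
      have step2 : FRel σ ψ V (σ a) (bar ψ (pV σ ψ V (σ a))) :=
        ih (σ a) (by omega) hσa hscσ
      rw [pV_sigma σ ψ V ha (backward_ne_of_sc σ ψ V hsc)] at step2
      exact FRel.trans σ ψ V step1 step2
    · have h3 : a ∈ H3 σ ψ V := ⟨ha, hsc, hσa⟩
      have := FRel.step σ ψ V a
      rwa [flip_H3 σ ψ V h3] at this

lemma chain_nV {h : H} (hh : ¬ inPoly ψ V h) : FRel σ ψ V h (nV σ ψ V h) := by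
  by_cases h4 : h ∈ H4 σ ψ V
  · obtain ⟨he, hse, hnv⟩ := xF_spec σ ψ V h4
    have h1 : FRel σ ψ V h (xF σ ψ V h) := by
      have := FRel.step σ ψ V h
      rwa [flip_H4 σ ψ V h4] at this
    have hscE : ¬ ∀ x, σ.SameCycle (xF σ ψ V h) x → inPoly ψ V x := by
      intro hall
      exact hse (hall _ (sc_symm_apply σ _))
    have h2 : FRel σ ψ V (xF σ ψ V h) (bar ψ (pV σ ψ V (xF σ ψ V h))) :=
      chain_H23 σ ψ V _ _ le_rfl he hscE
    have hpe : pV σ ψ V (xF σ ψ V h) = σ.symm (xF σ ψ V h) := by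
      have hps : pSteps σ ψ V (xF σ ψ V h) = 1 := by
        apply pSteps_eq σ ψ V le_rfl
        · rw [pow_one]
          exact hse
        · intro i hi1 hi
          omega
      show (σ.symm ^ pSteps σ ψ V (xF σ ψ V h)) (xF σ ψ V h) = _
      rw [hps, pow_one]
    rw [hpe, ← hnv] at h2
    exact FRel.trans σ ψ V h1 h2
  · have h5 : h ∈ H5 σ ψ V :=
      ⟨hh, fun e he hse hnv => h4 ⟨hh, e, he, hse, hnv⟩⟩
    have := FRel.step σ ψ V h
    rwa [flip_H5 σ ψ V h5] at this

lemma chain_pow : ∀ n x, ¬ inPoly ψ V x → ¬ inPoly ψ V ((σ ^ n) x) →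
    FRel σ ψ V x ((σ ^ n) x) := by
  intro n
  induction n using Nat.strong_induction_on with
  | _ n ih =>
    intro x hx hnx
    rcases Nat.eq_zero_or_pos n with rfl | hn
    · rw [pow_zero]
      exact FRel.refl σ ψ V x
    · set Q : ℕ → Prop := fun k => ¬ inPoly ψ V ((σ ^ k) x) with hQ
      set k := Nat.findGreatest Q (n - 1) with hk
      have hkQ : Q k := Nat.findGreatest_spec (Nat.zero_le _) (by simpa [hQ] using hx)
      have hkn : k ≤ n - 1 := Nat.findGreatest_le _
      have hgt : ∀ j, k < j → j ≤ n - 1 → inPoly ψ V ((σ ^ j) x) := by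
        intro j hj hj2
        have := Nat.findGreatest_is_greatest (P := Q) (hk ▸ hj) hj2
        simpa [hQ] using this
      have hstep : nSteps σ ψ V ((σ ^ k) x) = n - k := by
        apply nSteps_eq
        · omega
        · rw [pow_apply_pow, Nat.sub_add_cancel (by omega)]
          exact hnx
        · intro j hj1 hjlt
          rw [pow_apply_pow]
          exact hgt (j + k) (by omega) (by omega)
      have h1 : FRel σ ψ V x ((σ ^ k) x) := ih k (by omega) x hx hkQ
      have h2 : FRel σ ψ V ((σ ^ k) x) ((σ ^ n) x) := by
        have := chain_nV σ ψ V hkQ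
        have hnv : nV σ ψ V ((σ ^ k) x) = (σ ^ n) x := by
          show (σ ^ nSteps σ ψ V ((σ ^ k) x)) ((σ ^ k) x) = _
          rw [hstep, pow_apply_pow, Nat.sub_add_cancel (by omega)]
        rwa [hnv] at this
      exact FRel.trans σ ψ V h1 h2

lemma chain_sc {x y : H} (hx : ¬ inPoly ψ V x) (hy : ¬ inPoly ψ V y)
    (hsc : σ.SameCycle x y) : FRel σ ψ V x y := by
  obtain ⟨n, -, rfl⟩ := exists_pow_sc σ hsc
  exact chain_pow σ ψ V n x hx hy

lemma mem_H1_pow {a : H} (h1 : a ∈ H1 σ ψ V) (n : ℕ) : (σ ^ n) a ∈ H1 σ ψ V :=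
  ⟨h1.2 _ (sc_pow σ n a), fun x hx => h1.2 x ((sc_pow σ n a).trans hx)⟩

lemma chain_H1_pow {a : H} (h1 : a ∈ H1 σ ψ V) : ∀ n, FRel σ ψ V a ((σ ^ n) a) := by
  intro n
  induction n with
  | zero => rw [pow_zero]; exact FRel.refl σ ψ V a
  | succ n ih =>
    have hstep := FRel.step σ ψ V ((σ ^ n) a)
    rw [flip_H12 σ ψ V (Or.inl (mem_H1_pow σ ψ V h1 n))] at hstep
    rw [pow_succ_apply]
    exact FRel.trans σ ψ V ih hstep

lemma chain_H1_sc {a b : H} (h1 : a ∈ H1 σ ψ V) (hsc : σ.SameCycle a b) :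
    FRel σ ψ V a b := by
  obtain ⟨n, -, rfl⟩ := exists_pow_sc σ hsc
  exact chain_H1_pow σ ψ V h1 n

/- ## gammaFun lemmas -/

lemma gamma_eq_of_not {h : H} (hn : ¬ (h ∈ H2 σ ψ V ∨ h ∈ H3 σ ψ V)) :
    gammaFun σ ψ V h = vtx σ h := by
  rw [gammaFun, if_neg hn]

lemma gamma_eq_of {h : H} (h23 : h ∈ H2 σ ψ V ∨ h ∈ H3 σ ψ V) :
    gammaFun σ ψ V h = vtx σ (bar ψ (pV σ ψ V h)) := by
  rw [gammaFun, if_pos h23]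

lemma vtx_eq_of_sc {a b : H} (hsc : σ.SameCycle a b) : vtx σ a = vtx σ b :=
  Quotient.sound hsc

/-- `bar (p_V h)` is outside `V`, for `h` in `H₂ ∪ H₃` (uses condition (E)). -/
lemma barpV_not_in (hE : condE σ ψ V) {h : H}
    (hh : inPoly ψ V h) (hsc : ¬ ∀ x, σ.SameCycle h x → inPoly ψ V x) :
    ¬ inPoly ψ V (bar ψ (pV σ ψ V h)) ∧ bar ψ (bar ψ (pV σ ψ V h)) = pV σ ψ V h ∧
      ¬ inPoly ψ V (pV σ ψ V h) ∧ inPoly ψ V (σ (pV σ ψ V h)) := by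
  have hne := backward_ne_of_sc σ ψ V hsc
  have hbn : ¬ inPoly ψ V (pV σ ψ V h) := (pSteps_spec σ ψ V hne).2.1
  have hσb : inPoly ψ V (σ (pV σ ψ V h)) := sigma_pV_in σ ψ V hh hne
  obtain ⟨-, hb1, hb2⟩ := edge_of_exit σ ψ V hE hσb hbn
  exact ⟨hb1, hb2, hbn, hσb⟩

lemma mem_H1_sigma {h : H} (h1 : h ∈ H1 σ ψ V) : σ h ∈ H1 σ ψ V := by
  have := mem_H1_pow σ ψ V h1 1
  rwa [pow_one] at this

lemma vtx_sigma_pow (n : ℕ) (h : H) : vtx σ ((σ ^ n) h) = vtx σ h :=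
  (vtx_eq_of_sc σ (sc_pow σ n h)).symm

lemma pV_of_exit1 {e : H} (hse : ¬ inPoly ψ V (σ.symm e)) :
    pV σ ψ V e = σ.symm e := by
  have hps : pSteps σ ψ V e = 1 := by
    apply pSteps_eq σ ψ V le_rfl
    · rw [pow_one]
      exact hse
    · intro i hi1 hi
      omega
  show (σ.symm ^ pSteps σ ψ V e) e = _
  rw [hps, pow_one]

lemma mem_H23_of_exit {e : H} (he : inPoly ψ V e) (hse : ¬ inPoly ψ V (σ.symm e)) :
    e ∈ H2 σ ψ V ∨ e ∈ H3 σ ψ V := by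
  have hscE : ¬ ∀ x, σ.SameCycle e x → inPoly ψ V x := fun hall =>
    hse (hall _ (sc_symm_apply σ e))
  by_cases hσe : inPoly ψ V (σ e)
  · exact Or.inl ⟨he, hscE, hσe⟩
  · exact Or.inr ⟨he, hscE, hσe⟩

lemma gamma_flip (hE : condE σ ψ V) (h : H) :
    gammaFun σ ψ V (flipFun σ ψ V h) = gammaFun σ ψ V h := by
  rcases cases5 σ ψ V h with h1 | h2 | h3 | h4 | h5
  · rw [flip_H12 σ ψ V (Or.inl h1),
      gamma_eq_of_not σ ψ V (H1_not23 σ ψ V (mem_H1_sigma σ ψ V h1)),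
      gamma_eq_of_not σ ψ V (H1_not23 σ ψ V h1)]
    have := vtx_sigma_pow σ 1 h
    rwa [pow_one] at this
  · have hscσ : ¬ ∀ x, σ.SameCycle (σ h) x → inPoly ψ V x := fun hall =>
      h2.2.1 fun x hx => hall x (Equiv.Perm.sameCycle_apply_left.mpr hx)
    have h23' : σ h ∈ H2 σ ψ V ∨ σ h ∈ H3 σ ψ V := by
      by_cases hσσ : inPoly ψ V (σ (σ h))
      · exact Or.inl ⟨h2.2.2, hscσ, hσσ⟩
      · exact Or.inr ⟨h2.2.2, hscσ, hσσ⟩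
    rw [flip_H12 σ ψ V (Or.inr h2), gamma_eq_of σ ψ V h23',
      gamma_eq_of σ ψ V (Or.inl h2),
      pV_sigma σ ψ V h2.1 (backward_ne_of_sc σ ψ V h2.2.1)]
  · obtain ⟨hg, -, -, -⟩ := barpV_not_in σ ψ V hE h3.1 h3.2.1
    rw [flip_H3 σ ψ V h3, gamma_eq_of_not σ ψ V (notP_not23 σ ψ V hg),
      gamma_eq_of σ ψ V (Or.inr h3)]
  · obtain ⟨he, hse, hnv⟩ := xF_spec σ ψ V h4
    rw [flip_H4 σ ψ V h4, gamma_eq_of σ ψ V (mem_H23_of_exit σ ψ V he hse),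
      pV_of_exit1 σ ψ V hse, ← hnv, gamma_eq_of_not σ ψ V (notP_not23 σ ψ V h4.1)]
    exact vtx_sigma_pow σ _ h
  · have hgn : ¬ inPoly ψ V (nV σ ψ V h) :=
      (nSteps_spec σ ψ V (forward_ne σ ψ V h5.1)).2.1
    rw [flip_H5 σ ψ V h5, gamma_eq_of_not σ ψ V (notP_not23 σ ψ V hgn),
      gamma_eq_of_not σ ψ V (notP_not23 σ ψ V h5.1)]
    exact vtx_sigma_pow σ _ h

/- ## Left inverse of flipFun -/

def flipInv (g : H) : H :=
  if inPoly ψ V g then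
    (if inPoly ψ V (σ.symm g) then σ.symm g else pV σ ψ V (bar ψ (σ.symm g)))
  else
    (if ∃ e, inPoly ψ V e ∧ ¬ inPoly ψ V (σ.symm e) ∧ bar ψ (σ.symm e) = g
     then σ.symm (nV σ ψ V (bar ψ g)) else pV σ ψ V g)

lemma leftInv (hE : condE σ ψ V) :
    Function.LeftInverse (flipInv σ ψ V) (flipFun σ ψ V) := by
  intro h
  rcases cases5 σ ψ V h with h1 | h2 | h3 | h4 | h5
  · rw [flip_H12 σ ψ V (Or.inl h1), flipInv, if_pos (mem_H1_sigma σ ψ V h1).1,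
      Equiv.symm_apply_apply, if_pos h1.1]
  · rw [flip_H12 σ ψ V (Or.inr h2), flipInv, if_pos h2.2.2,
      Equiv.symm_apply_apply, if_pos h2.1]
  · obtain ⟨hg, hbb, hbn, hσb⟩ := barpV_not_in σ ψ V hE h3.1 h3.2.1
    have hex : ∃ e, inPoly ψ V e ∧ ¬ inPoly ψ V (σ.symm e) ∧
        bar ψ (σ.symm e) = bar ψ (pV σ ψ V h) :=
      ⟨σ (pV σ ψ V h), hσb, by rw [Equiv.symm_apply_apply]; exact hbn,
        by rw [Equiv.symm_apply_apply]⟩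
    rw [flip_H3 σ ψ V h3, flipInv, if_neg hg, if_pos hex, hbb,
      nV_pV_of_exit σ ψ V h3.1 h3.2.2 (backward_ne_of_sc σ ψ V h3.2.1),
      Equiv.symm_apply_apply]
  · obtain ⟨he, hse, hnv⟩ := xF_spec σ ψ V h4
    rw [flip_H4 σ ψ V h4, flipInv, if_pos he, if_neg hse, ← hnv, pV_nV σ ψ V h4.1]
  · have hgn : ¬ inPoly ψ V (nV σ ψ V h) :=
      (nSteps_spec σ ψ V (forward_ne σ ψ V h5.1)).2.1
    have hnex : ¬ ∃ e, inPoly ψ V e ∧ ¬ inPoly ψ V (σ.symm e) ∧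
        bar ψ (σ.symm e) = nV σ ψ V h := by
      rintro ⟨e, he, hse, hbe⟩
      exact h5.2 e he hse hbe.symm
    rw [flip_H5 σ ψ V h5, flipInv, if_neg hgn, if_neg hnex, pV_nV σ ψ V h5.1]

/- ## Injectivity of gamma -/

lemma gamma_inj_aux (hE : condE σ ψ V) (c : H) :
    ∃ w, FRel σ ψ V c w ∧ gammaFun σ ψ V c = vtx σ w ∧
      (¬ inPoly ψ V w ∨ (c ∈ H1 σ ψ V ∧ w = c)) := by
  rcases cases5 σ ψ V c with h1 | h2 | h3 | h4 | h5
  · exact ⟨c, FRel.refl σ ψ V c, gamma_eq_of_not σ ψ V (H1_not23 σ ψ V h1),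
      Or.inr ⟨h1, rfl⟩⟩
  · exact ⟨bar ψ (pV σ ψ V c), chain_H23 σ ψ V _ c le_rfl h2.1 h2.2.1,
      gamma_eq_of σ ψ V (Or.inl h2), Or.inl (barpV_not_in σ ψ V hE h2.1 h2.2.1).1⟩
  · exact ⟨bar ψ (pV σ ψ V c), chain_H23 σ ψ V _ c le_rfl h3.1 h3.2.1,
      gamma_eq_of σ ψ V (Or.inr h3), Or.inl (barpV_not_in σ ψ V hE h3.1 h3.2.1).1⟩
  · exact ⟨c, FRel.refl σ ψ V c, gamma_eq_of_not σ ψ V (notP_not23 σ ψ V h4.1),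
      Or.inl h4.1⟩
  · exact ⟨c, FRel.refl σ ψ V c, gamma_eq_of_not σ ψ V (notP_not23 σ ψ V h5.1),
      Or.inl h5.1⟩

lemma gamma_inj (hE : condE σ ψ V) {a b : H}
    (hab : gammaFun σ ψ V a = gammaFun σ ψ V b) : FRel σ ψ V a b := by
  obtain ⟨wa, hra, hga, hca⟩ := gamma_inj_aux σ ψ V hE a
  obtain ⟨wb, hrb, hgb, hcb⟩ := gamma_inj_aux σ ψ V hE b
  have hv : vtx σ wa = vtx σ wb := by rw [← hga, ← hgb, hab]
  have hsc : σ.SameCycle wa wb := Quotient.exact hv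
  rcases hca with hwa | ⟨h1a, rfl⟩
  · rcases hcb with hwb | ⟨h1b, rfl⟩
    · exact FRel.trans σ ψ V hra
        (FRel.trans σ ψ V (chain_sc σ ψ V hwa hwb hsc) (FRel.symm σ ψ V hrb))
    · exact absurd (h1b.2 wa hsc.symm) hwa
  · rcases hcb with hwb | ⟨h1b, rfl⟩
    · exact absurd (h1a.2 wb hsc) hwb
    · exact chain_H1_sc σ ψ V h1a hsc

end FlipAux

-- STATEMENT 15
theorem flip_isBrauerConfig
    (σ : Equiv.Perm H) (ψ : Setoid H) (m : Vertex σ → ℕ)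
    (hΓ : IsBrauerConfig σ ψ m) (V : BrauerPolygon ψ) (hE : condE σ ψ V) :
    Function.Bijective (flipFun σ ψ V) ∧
      (∀ h : H, ∃ h', h' ≠ h ∧ ψ.r h h') ∧
      ∃ γ : Quotient (flipOrbitSetoid σ ψ V) → Vertex σ,
        Function.Bijective γ ∧ (∀ h : H, γ (vtx' σ ψ V h) = gammaFun σ ψ V h) ∧
        ∀ v' : Quotient (flipOrbitSetoid σ ψ V), 0 < m (γ v') := by
  obtain ⟨hne, htwo, hm⟩ := hΓ
  refine ⟨?_, htwo, ?_⟩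
  · exact Finite.injective_iff_bijective.mp (FlipAux.leftInv σ ψ V hE).injective
  · have wd : ∀ a b : H, (flipOrbitSetoid σ ψ V).r a b →
        gammaFun σ ψ V a = gammaFun σ ψ V b := by
      intro a b hab
      have hab' : Relation.EqvGen (fun a b => flipFun σ ψ V a = b) a b := hab
      clear hab
      induction hab' with
      | rel x y hxy => rw [← hxy, FlipAux.gamma_flip σ ψ V hE]
      | refl x => rfl
      | symm x y _ ih => exact ih.symm
      | trans x y z _ _ ih1 ih2 => exact ih1.trans ih2
    refine ⟨Quotient.lift (gammaFun σ ψ V) wd, ⟨?_, ?_⟩, fun h => rfl, fun v' => hm _⟩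
    · exact fun q1 q2 => Quotient.inductionOn₂ q1 q2 fun a b hq =>
        Quotient.sound (FlipAux.gamma_inj σ ψ V hE hq)
    · intro v
      obtain ⟨h, rfl⟩ := Quotient.exists_rep v
      by_cases h23 : h ∈ H2 σ ψ V ∨ h ∈ H3 σ ψ V
      · have hsc : ¬ ∀ x, σ.SameCycle h x → inPoly ψ V x :=
          h23.elim (fun t => t.2.1) (fun t => t.2.1)
        push_neg at hsc
        obtain ⟨x, hx, hxV⟩ := hsc
        refine ⟨Quotient.mk _ x, ?_⟩
        show gammaFun σ ψ V x = _
        rw [FlipAux.gamma_eq_of_not σ ψ V (FlipAux.notP_not23 σ ψ V hxV)]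
        exact Quotient.sound hx.symm
      · refine ⟨Quotient.mk _ h, ?_⟩
        show gammaFun σ ψ V h = _
        rw [FlipAux.gamma_eq_of_not σ ψ V h23]
        rfl
end
end
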